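/- For any assignment of mirrors on the infinite cylinder Z × Z/(2n+1) (odd circumference), there exists at least one infinite (non-periodic, unbounded) light trajectory. -/

import Mathlib

/-- Directions of travel of the light ray. -/
inductive Dir | N | E | S | W
deriving DecidableEq

/-- Mirror designation at a vertex: no mirror, north-west mirror, or north-east mirror. -/
inductive Mirror | no | NW | NE
deriving DecidableEq

/-- Reflection of a direction by a mirror (no mirror: straight). -/
def reflect : Mirror → Dir → Dir
  | .no, d => d
  | .NW, .E => .N
  | .NW, .N => .E
  | .NW, .W => .S
  | .NW, .S => .W
  | .NE, .E => .S
  | .NE, .S => .E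
  | .NE, .W => .N
  | .NE, .N => .W

/-- One step in a direction on the cylinder `ℤ × ZMod m`. -/
def moveC {m : ℕ} (v : ℤ × ZMod m) : Dir → ℤ × ZMod m
  | .N => (v.1, v.2 + 1)
  | .S => (v.1, v.2 - 1)
  | .E => (v.1 + 1, v.2)
  | .W => (v.1 - 1, v.2)

/-- The step map of the mirror model on the cylinder: move one step, then reflect
at the mirror (if any) at the new vertex. -/
def stepC {m : ℕ} (c : ℤ × ZMod m → Mirror) (s : (ℤ × ZMod m) × Dir) :
    (ℤ × ZMod m) × Dir :=
  (moveC s.1 s.2, reflect (c (moveC s.1 s.2)) s.2)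

instance : Fintype Dir := ⟨{Dir.N, Dir.E, Dir.S, Dir.W}, fun d => by cases d <;> simp⟩

namespace MirrorAux

/-- Opposite direction. -/
def dopp : Dir → Dir
  | .N => .S
  | .S => .N
  | .E => .W
  | .W => .E

/-- Time-reversal map on states. -/
def hrev {m : ℕ} (s : (ℤ × ZMod m) × Dir) : (ℤ × ZMod m) × Dir :=
  (moveC s.1 s.2, dopp s.2)

lemma moveC_dopp {m : ℕ} (v : ℤ × ZMod m) (d : Dir) : moveC (moveC v d) (dopp d) = v := by
  cases d <;> simp [moveC, dopp]

lemma dopp_dopp (d : Dir) : dopp (dopp d) = d := by cases d <;> rfl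

lemma hrev_hrev {m : ℕ} (s : (ℤ × ZMod m) × Dir) : hrev (hrev s) = s := by
  obtain ⟨v, d⟩ := s
  simp [hrev, moveC_dopp, dopp_dopp]

lemma reflect_dopp_reflect (mi : Mirror) (d : Dir) :
    reflect mi (dopp (reflect mi d)) = dopp d := by cases mi <;> cases d <;> rfl

lemma step_hrev_step {m : ℕ} (c : ℤ × ZMod m → Mirror) (s : (ℤ × ZMod m) × Dir) :
    stepC c (hrev (stepC c s)) = hrev s := by
  obtain ⟨v, d⟩ := s
  simp only [stepC, hrev, moveC_dopp, reflect_dopp_reflect]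

lemma iter_hrev_iter {m : ℕ} (c : ℤ × ZMod m → Mirror) (j : ℕ) (s : (ℤ × ZMod m) × Dir) :
    (stepC c)^[j] (hrev ((stepC c)^[j] s)) = hrev s := by
  induction j generalizing s with
  | zero => rfl
  | succ j ih =>
    rw [Function.iterate_succ_apply' (stepC c) j s, Function.iterate_succ_apply (stepC c) j,
      step_hrev_step]
    exact ih s

lemma dopp_ne (d : Dir) : dopp d ≠ d := by cases d <;> simp [dopp]

lemma hrev_ne {m : ℕ} (s : (ℤ × ZMod m) × Dir) : hrev s ≠ s := by
  intro h
  exact dopp_ne s.2 (congrArg Prod.snd h)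

lemma dopp_ne_reflect (mi : Mirror) (d : Dir) : dopp d ≠ reflect mi d := by
  cases mi <;> cases d <;> simp [dopp, reflect]

lemma hrev_ne_step {m : ℕ} (c : ℤ × ZMod m → Mirror) (s : (ℤ × ZMod m) × Dir) :
    hrev s ≠ stepC c s := by
  intro h
  exact dopp_ne_reflect (c (moveC s.1 s.2)) s.2 (congrArg Prod.snd h)

/-- Key lemma: the time-reversal of a state is never on its forward orbit. -/
lemma no_rev {m : ℕ} (c : ℤ × ZMod m → Mirror) (r : ℕ) (s : (ℤ × ZMod m) × Dir) :
    (stepC c)^[r] s ≠ hrev s := by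
  intro hr
  have key : ∀ k, k ≤ r → hrev ((stepC c)^[r - k] s) = (stepC c)^[k] s := by
    intro k
    induction k with
    | zero => intro _; simpa [hr] using hrev_hrev s
    | succ k ih =>
      intro hk
      have hk' : k ≤ r := Nat.le_of_succ_le hk
      have e1 : r - k = (r - (k + 1)) + 1 := by omega
      calc hrev ((stepC c)^[r - (k + 1)] s)
          = stepC c (hrev (stepC c ((stepC c)^[r - (k + 1)] s))) :=
            (step_hrev_step c _).symm
        _ = stepC c (hrev ((stepC c)^[r - k] s)) := by
            rw [e1, Function.iterate_succ_apply']
        _ = stepC c ((stepC c)^[k] s) := by rw [ih hk']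
        _ = (stepC c)^[k + 1] s := (Function.iterate_succ_apply' (stepC c) k s).symm
  rcases Nat.even_or_odd r with ⟨mm, hm⟩ | ⟨mm, hm⟩
  · have h1 := key mm (by omega)
    rw [show r - mm = mm by omega] at h1
    exact hrev_ne _ h1
  · have h1 := key mm (by omega)
    rw [show r - mm = mm + 1 by omega] at h1
    have h2 : (stepC c)^[mm + 1] s = hrev ((stepC c)^[mm] s) := by
      rw [← h1, hrev_hrev]
    rw [Function.iterate_succ_apply'] at h2
    exact hrev_ne_step c ((stepC c)^[mm] s) h2.symm

lemma reflect_inj (mi : Mirror) : Function.Injective (reflect mi) := by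
  intro d d' h
  cases mi <;> cases d <;> cases d' <;> first | rfl | simp [reflect] at h

lemma moveC_inj {m : ℕ} (v v' : ℤ × ZMod m) (d : Dir) (h : moveC v d = moveC v' d) :
    v = v' := by
  have h2 := congrArg (fun w => moveC w (dopp d)) h
  simpa only [moveC_dopp] using h2

lemma step_inj {m : ℕ} (c : ℤ × ZMod m → Mirror) : Function.Injective (stepC c) := by
  rintro ⟨v, d⟩ ⟨v', d'⟩ h
  simp only [stepC, Prod.mk.injEq] at h
  obtain ⟨h1, h2⟩ := h
  rw [h1] at h2
  have hd : d = d' := reflect_inj _ h2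
  subst hd
  have hv : v = v' := moveC_inj v v' d h1
  rw [hv]

lemma step_fst {m : ℕ} (c : ℤ × ZMod m → Mirror) (s : (ℤ × ZMod m) × Dir) :
    ((stepC c s).1.1 = s.1.1 + 1 ∧ s.2 = Dir.E) ∨
    ((stepC c s).1.1 = s.1.1 - 1 ∧ s.2 = Dir.W) ∨ ((stepC c s).1.1 = s.1.1) := by
  obtain ⟨⟨x, z⟩, d⟩ := s
  cases d <;> simp [stepC, moveC]

/-- The eastward crossing state at height `y`. -/
def A {m : ℕ} (y : ZMod m) : (ℤ × ZMod m) × Dir := ((0, y), Dir.E)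

/-- Westward crossing states. -/
def isW {m : ℕ} (s : (ℤ × ZMod m) × Dir) : Prop := s.1.1 = 1 ∧ s.2 = Dir.W

lemma hrev_of_isW {m : ℕ} (s : (ℤ × ZMod m) × Dir) (h : isW s) : hrev s = A s.1.2 := by
  obtain ⟨⟨x, z⟩, d⟩ := s
  obtain ⟨h1, h2⟩ := h
  simp only at h1 h2
  subst h1; subst h2
  simp [hrev, moveC, dopp, A]

lemma hrev_A {m : ℕ} (y : ZMod m) : hrev (A y) = ((1, y), Dir.W) := by
  simp [hrev, A, moveC, dopp]

lemma isW_hrev_A {m : ℕ} (y : ZMod m) : isW (hrev (A y)) := by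
  rw [hrev_A]; exact ⟨rfl, rfl⟩

lemma x_one {m : ℕ} (c : ℤ × ZMod m → Mirror) (y : ZMod m) :
    (stepC c (A y)).1.1 = 1 := by
  simp [stepC, A, moveC]

/-- If the orbit of `A y` is periodic, it contains a westward crossing state. -/
lemma exists_isW {m : ℕ} (c : ℤ × ZMod m → Mirror) (y : ZMod m) (T : ℕ) (hT : 0 < T)
    (hTs : (stepC c)^[T] (A y) = A y) :
    ∃ r, 0 < r ∧ isW ((stepC c)^[r] (A y)) := by
  classical
  have hx1 : ((stepC c)^[1] (A y)).1.1 = 1 := by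
    rw [Function.iterate_one]; exact x_one c y
  have hxT : ((stepC c)^[T] (A y)).1.1 = 0 := by rw [hTs]; rfl
  have hT2 : 2 ≤ T := by
    by_contra h
    have : T = 1 := by omega
    rw [this] at hxT
    omega
  have hQ : ∃ j, 1 ≤ j ∧ ((stepC c)^[j + 1] (A y)).1.1 ≤ 0 := by
    refine ⟨T - 1, by omega, ?_⟩
    rw [show T - 1 + 1 = T by omega, hxT]
  set j₀ := Nat.find hQ with hj₀def
  have hj1 : 1 ≤ j₀ := (Nat.find_spec hQ).1
  have hj2 : ((stepC c)^[j₀ + 1] (A y)).1.1 ≤ 0 := (Nat.find_spec hQ).2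
  have hxj : 1 ≤ ((stepC c)^[j₀] (A y)).1.1 := by
    rcases Nat.eq_or_lt_of_le hj1 with h | h
    · rw [← h] at hj2 ⊢
      omega
    · have hk := Nat.find_min hQ (show j₀ - 1 < j₀ by omega)
      rw [show j₀ - 1 + 1 = j₀ by omega] at hk
      omega
  have hx' : ((stepC c)^[j₀ + 1] (A y)).1.1 = (stepC c ((stepC c)^[j₀] (A y))).1.1 := by
    rw [Function.iterate_succ_apply']
  rcases step_fst c ((stepC c)^[j₀] (A y)) with ⟨h1, _⟩ | ⟨h1, h2⟩ | h1
  · rw [hx'] at hj2; omega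
  · refine ⟨j₀, by omega, ?_, h2⟩
    rw [hx'] at hj2
    omega
  · rw [hx'] at hj2; omega

end MirrorAux

/-- A fixed-point-free involution on `ZMod (2n+1)` is impossible. -/
lemma no_fpf_involution (n : ℕ) (τ : ZMod (2 * n + 1) → ZMod (2 * n + 1))
    (hinv : ∀ y, τ (τ y) = y) (hne : ∀ y, τ y ≠ y) : False := by
  haveI : NeZero (2 * n + 1) := ⟨by omega⟩
  classical
  set s : Finset (ZMod (2 * n + 1)) :=
    Finset.univ.filter (fun y => y.val < (τ y).val) with hs
  set t : Finset (ZMod (2 * n + 1)) :=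
    Finset.univ.filter (fun y => (τ y).val < y.val) with ht
  have hvalne : ∀ y, (τ y).val ≠ y.val := by
    intro y h
    exact hne y (ZMod.val_injective _ h)
  have hunion : (Finset.univ : Finset (ZMod (2 * n + 1))) = s ∪ t := by
    ext y
    simp only [hs, ht, Finset.mem_union, Finset.mem_filter, Finset.mem_univ, true_and,
      true_iff]
    have := hvalne y
    omega
  have hdisj : Disjoint s t := by
    rw [Finset.disjoint_left]
    intro y hy hy'
    simp only [hs, ht, Finset.mem_filter, Finset.mem_univ, true_and] at hy hy'
    omega
  have hcard : s.card = t.card := by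
    refine Finset.card_bij (fun y _ => τ y) ?_ ?_ ?_
    · intro y hy
      simp only [hs, ht, Finset.mem_filter, Finset.mem_univ, true_and] at hy ⊢
      rw [hinv]
      exact hy
    · intro y hy y' hy' h
      have := congrArg τ h
      rwa [hinv, hinv] at this
    · intro z hz
      refine ⟨τ z, ?_, hinv z⟩
      simp only [hs, ht, Finset.mem_filter, Finset.mem_univ, true_and] at hz ⊢
      rw [hinv]
      exact hz
  have hcu : (Finset.univ : Finset (ZMod (2 * n + 1))).card = 2 * n + 1 := by
    rw [Finset.card_univ, ZMod.card]
  rw [hunion, Finset.card_union_of_disjoint hdisj, hcard] at hcu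
  omega

open MirrorAux in
/-- For every mirror configuration on the cylinder `ℤ × ZMod (2n+1)` (odd
circumference) there is an infinite light trajectory: some initial state whose
orbit is non-periodic and visits infinitely many vertices. -/
theorem exists_infinite_trajectory_cylinder (n : ℕ)
    (c : ℤ × ZMod (2 * n + 1) → Mirror) :
    ∃ s : (ℤ × ZMod (2 * n + 1)) × Dir,
      (∀ T : ℕ, 0 < T → (stepC c)^[T] s ≠ s) ∧
      Set.Infinite (Set.range fun k : ℕ => ((stepC c)^[k] s).1) := by
  classical
  by_contra hcon
  push_neg at hcon
  -- Every state is periodic.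
  have Hper : ∀ s, ∃ T, 0 < T ∧ (stepC c)^[T] s = s := by
    intro s
    by_contra hnp
    push_neg at hnp
    have hinj : Function.Injective (fun k : ℕ => (stepC c)^[k] s) := by
      intro a b hab
      simp only at hab
      rcases lt_trichotomy a b with h | h | h
      · exfalso
        have h0 : (stepC c)^[a] ((stepC c)^[b - a] s) = (stepC c)^[a] s := by
          rw [← Function.iterate_add_apply, show a + (b - a) = b by omega, ← hab]
        exact hnp (b - a) (by omega) ((step_inj c).iterate a h0)
      · exact h
      · exfalso
        have h0 : (stepC c)^[b] ((stepC c)^[a - b] s) = (stepC c)^[b] s := by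
          rw [← Function.iterate_add_apply, show b + (a - b) = a by omega, hab]
        exact hnp (a - b) (by omega) ((step_inj c).iterate b h0)
    have hinf : Set.Infinite (Set.range fun k : ℕ => (stepC c)^[k] s) :=
      Set.infinite_range_of_injective hinj
    have hfin := hcon s hnp
    have hsub : (Set.range fun k : ℕ => (stepC c)^[k] s) ⊆
        (Set.range fun k : ℕ => ((stepC c)^[k] s).1) ×ˢ (Set.univ : Set Dir) := by
      rintro _ ⟨k, rfl⟩
      exact ⟨⟨k, rfl⟩, trivial⟩
    exact ((hfin.prod Set.finite_univ).subset hsub).not_infinite hinf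
  haveI : NeZero (2 * n + 1) := ⟨by omega⟩
  have hex : ∀ y : ZMod (2 * n + 1), ∃ r, 0 < r ∧ isW ((stepC c)^[r] (A y)) := by
    intro y
    obtain ⟨T, hT, hTs⟩ := Hper (A y)
    exact exists_isW c y T hT hTs
  set ry : ZMod (2 * n + 1) → ℕ := fun y => Nat.find (hex y) with hry
  have hrspec : ∀ y, 0 < ry y ∧ isW ((stepC c)^[ry y] (A y)) := fun y => Nat.find_spec (hex y)
  have hrmin : ∀ y i, i < ry y → ¬(0 < i ∧ isW ((stepC c)^[i] (A y))) :=
    fun y i hi => Nat.find_min (hex y) hi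
  set τ : ZMod (2 * n + 1) → ZMod (2 * n + 1) :=
    fun y => ((stepC c)^[ry y] (A y)).1.2 with hτ
  have hAτ : ∀ y, A (τ y) = hrev ((stepC c)^[ry y] (A y)) :=
    fun y => (hrev_of_isW _ (hrspec y).2).symm
  have claim1 : ∀ y, (stepC c)^[ry y] (A (τ y)) = hrev (A y) := by
    intro y
    rw [hAτ y, iter_hrev_iter]
  -- No return to the cut before the first westward crossing.
  have hxpos : ∀ y i, 1 ≤ i → i ≤ ry y → 1 ≤ ((stepC c)^[i] (A y)).1.1 := by
    intro y i
    induction i with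
    | zero => omega
    | succ k ihk =>
      intro _ hk
      rcases Nat.eq_zero_or_pos k with rfl | hk0
      · rw [Function.iterate_one, x_one c y]
      · have hxk : 1 ≤ ((stepC c)^[k] (A y)).1.1 := ihk (by omega) (by omega)
        have hx' : ((stepC c)^[k + 1] (A y)).1.1 = (stepC c ((stepC c)^[k] (A y))).1.1 := by
          rw [Function.iterate_succ_apply']
        rcases step_fst c ((stepC c)^[k] (A y)) with ⟨h1, _⟩ | ⟨h1, h2⟩ | h1
        · omega
        · by_cases hxx : ((stepC c)^[k] (A y)).1.1 = 1
          · exact absurd ⟨hk0, hxx, h2⟩ (hrmin y k (by omega))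
          · omega
        · omega
  have claim2 : ∀ y, ry (τ y) = ry y := by
    intro y
    have hle : ry (τ y) ≤ ry y :=
      Nat.find_le ⟨(hrspec y).1, by rw [claim1 y]; exact isW_hrev_A y⟩
    rcases Nat.eq_or_lt_of_le hle with h | h
    · exact h
    · exfalso
      have hs' := hrspec (τ y)
      have hsplit : (stepC c)^[ry y] (A y) =
          (stepC c)^[ry (τ y)] ((stepC c)^[ry y - ry (τ y)] (A y)) := by
        rw [← Function.iterate_add_apply, show ry (τ y) + (ry y - ry (τ y)) = ry y by omega]
      have he : (stepC c)^[ry (τ y)] (A (τ y)) =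
          hrev ((stepC c)^[ry y - ry (τ y)] (A y)) := by
        rw [hAτ y, hsplit, iter_hrev_iter]
      have hiw : isW (hrev ((stepC c)^[ry y - ry (τ y)] (A y))) := he ▸ hs'.2
      have hz : (stepC c)^[ry y - ry (τ y)] (A y) =
          A ((hrev ((stepC c)^[ry y - ry (τ y)] (A y))).1.2) := by
        rw [← hrev_of_isW _ hiw, hrev_hrev]
      have hx0 : ((stepC c)^[ry y - ry (τ y)] (A y)).1.1 = 0 := by rw [hz]; rfl
      have := hxpos y (ry y - ry (τ y)) (by omega) (by omega)
      omega
  have hτinv : ∀ y, τ (τ y) = y := by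
    intro y
    show ((stepC c)^[ry (τ y)] (A (τ y))).1.2 = y
    rw [claim2 y, claim1 y, hrev_A]
  have hτne : ∀ y, τ y ≠ y := by
    intro y h
    have hiw := (hrspec y).2
    have e1 : ((stepC c)^[ry y] (A y)).1.1 = 1 := hiw.1
    have e2 : ((stepC c)^[ry y] (A y)).2 = Dir.W := hiw.2
    have e3 : ((stepC c)^[ry y] (A y)).1.2 = y := h
    have heq : (stepC c)^[ry y] (A y) = hrev (A y) := by
      rw [hrev_A]
      exact Prod.ext (Prod.ext e1 e3) e2
    exact no_rev c (ry y) (A y) heq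
  exact no_fpf_involution n τ hτinv hτne
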